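/- For n ≥ 3, the set G = {α_{n,1}, α_{1,n}} ∪ {α_{j,j} : 2 ≤ j ≤ n−1} ∪ {π_{(i,i+1),n} : 1 ≤ i ≤ n−1}, of cardinality 2n−1, generates the semigroup ⟨K_{n−1}⟩ = OCP_{n,n−1} = {α ∈ OCP_n : |im α| ≤ n−1}. -/

import Mathlib

/-- Partial transformations on the chain with `n` elements. -/
abbrev PT (n : ℕ) := Fin n → Option (Fin n)

/-- Left-to-right composition of partial transformations: `x(f*g) = g(f(x))`. -/
instance PT.instMul (n : ℕ) : Mul (PT n) := ⟨fun f g x => (f x).bind g⟩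

instance PT.instSemigroup (n : ℕ) : Semigroup (PT n) where
  mul_assoc f g h := funext fun x => by
    show ((f x).bind g).bind h = (f x).bind (fun y => (g y).bind h)
    cases f x <;> rfl

/-- Domain of a partial transformation. -/
def dom {n : ℕ} (f : PT n) : Set (Fin n) := {x | (f x).isSome}

/-- Image of a partial transformation. -/
def im {n : ℕ} (f : PT n) : Set (Fin n) := {y | ∃ x, f x = some y}

/-- `f` is a contraction: `|f x - f y| ≤ |x - y|` on its domain. -/
def IsContraction {n : ℕ} (f : PT n) : Prop :=
  ∀ x y a b, f x = some a → f y = some b → Nat.dist a.val b.val ≤ Nat.dist x.val y.val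

/-- `f` is order-preserving on its domain. -/
def IsOP {n : ℕ} (f : PT n) : Prop :=
  ∀ x y a b, f x = some a → f y = some b → x ≤ y → a ≤ b

/-- `f` is order-reversing on its domain. -/
def IsOR {n : ℕ} (f : PT n) : Prop :=
  ∀ x y a b, f x = some a → f y = some b → x ≤ y → b ≤ a

/-- `α_{1,n}` : domain `[n]\{1}`, sends `k+1 ↦ k` (0-indexed: `x ↦ x-1` for `x ≠ 0`). -/
def a1n (n : ℕ) : PT n := fun x => if _h : x.val ≠ 0 then some ⟨x.val - 1, by have := x.isLt; omega⟩ else none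

/-- `α_{n,1}` : domain `[n]\{n}`, sends `k ↦ k+1`. -/
def an1 (n : ℕ) : PT n := fun x => if h : x.val + 1 < n then some ⟨x.val + 1, h⟩ else none

/-- `α_{j,j}` : the partial identity on `[n]\{j}` (0-indexed `j`). -/
def ajj (n j : ℕ) : PT n := fun x => if x.val = j then none else some x

/-- `π_{(i,i+1),n}` : the full order-preserving contraction merging `{i,i+1}` (0-indexed)
with image `{1,…,n-1}` (0-indexed `{0,…,n-2}`). -/
def piOP (n i : ℕ) : PT n :=
  fun x => some ⟨if x.val ≤ i then x.val else x.val - 1, by have := x.isLt; split <;> omega⟩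

/-- `α_{j,n}` : injective order-preserving map with domain `[n]\{j}` and image `[n]\{n}`. -/
def ajn (n j : ℕ) : PT n :=
  fun x => if x.val = j then none
    else some ⟨if x.val < j then x.val else x.val - 1, by have := x.isLt; split <;> omega⟩

/-- The generating set `G = {α_{n,1}, α_{1,n}} ∪ {α_{j,j}} ∪ {π_{(i,i+1),n}}` (0-indexed). -/
def genG (n : ℕ) : Set (PT n) :=
  {an1 n, a1n n} ∪ (ajj n '' {j | 1 ≤ j ∧ j ≤ n - 2}) ∪ (piOP n '' {i | i ≤ n - 2})

/-!
The generators are order-preserving contractions of rank `n - 1`, and these form a subsemigroup,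
which gives one inclusion. Conversely, let `f` be an order-preserving contraction of rank `< n`.
Multiplying on the left by partial identities `id_{[n]∖{j}}` (the generator `α_{j,j}` inside,
`α_{1,n} α_{n,1}` and `α_{n,1} α_{1,n}` at the ends) restricts any element of the closure to a
smaller domain, so it suffices to extend `f` to an element of the closure. A partial identity of
rank `< n` misses some `j` and extends to `id_{[n]∖{j}}`. Any other `f` extends to a full
order-preserving contraction `g ≠ id`, i.e. `x ↦ g x` with increments `0` or `1` that is not the
identity. Up to a translation (a power of `α_{n,1}`) we have `g 0 = 0`, and then `g` is a product
of the `π_{(i,i+1),n}`: splitting off the last flat step of `g` decreases their number.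
-/

namespace PT

variable {n : ℕ}

lemma mul_apply (f g : PT n) (x : Fin n) : (f * g) x = (f x).bind g := rfl

lemma ncard_le_pred_iff_exists_notMem (hn : 0 < n) {s : Set (Fin n)} :
    s.ncard ≤ n - 1 ↔ ∃ c, c ∉ s := by
  have hcard : (Set.univ : Set (Fin n)).ncard = n := by simp
  constructor
  · intro h
    by_contra! hs
    rw [Set.eq_univ_of_forall hs, hcard] at h
    omega
  · rintro ⟨c, hc⟩
    have := Set.ncard_lt_card (s := s) fun h => hc (h ▸ Set.mem_univ c)
    simp only [Nat.card_eq_fintype_card, Fintype.card_fin] at this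
    omega

lemma isOP_and_isContraction_of {f : PT n}
    (h : ∀ x y a b, f x = some a → f y = some b → x ≤ y → a ≤ b ∧ b.val ≤ a.val + (y.val - x.val)) :
    IsOP f ∧ IsContraction f := by
  refine ⟨fun x y a b ha hb hxy => (h x y a b ha hb hxy).1, fun x y a b ha hb => ?_⟩
  rcases le_total x y with hxy | hyx
  · have := h x y a b ha hb hxy
    rw [Fin.le_def] at this hxy
    simp only [Nat.dist]; omega
  · have := h y x b a hb ha hyx
    rw [Fin.le_def] at this hyx
    simp only [Nat.dist]; omega

lemma IsOP.mul {f g : PT n} (hf : IsOP f) (hg : IsOP g) : IsOP (f * g) := by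
  intro x y a b ha hb hxy
  rw [mul_apply, Option.bind_eq_some_iff] at ha hb
  obtain ⟨u, hu, ha⟩ := ha
  obtain ⟨v, hv, hb⟩ := hb
  exact hg u v a b ha hb (hf x y u v hu hv hxy)

lemma IsContraction.mul {f g : PT n} (hf : IsContraction f) (hg : IsContraction g) :
    IsContraction (f * g) := by
  intro x y a b ha hb
  rw [mul_apply, Option.bind_eq_some_iff] at ha hb
  obtain ⟨u, hu, ha⟩ := ha
  obtain ⟨v, hv, hb⟩ := hb
  exact (hg u v a b ha hb).trans (hf x y u v hu hv)

lemma im_mul_subset (f g : PT n) : im (f * g) ⊆ im g := by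
  rintro a ⟨x, hx⟩
  rw [mul_apply, Option.bind_eq_some_iff] at hx
  obtain ⟨u, -, hu⟩ := hx
  exact ⟨u, hu⟩

def OCP (n r : ℕ) : Subsemigroup (PT n) where
  carrier := {f | IsOP f ∧ IsContraction f ∧ (im f).ncard ≤ r}
  mul_mem' := fun {f g} ⟨hf, hf', _⟩ ⟨hg, hg', hgr⟩ =>
    ⟨IsOP.mul hf hg, IsContraction.mul hf' hg', (Set.ncard_le_ncard (im_mul_subset f g)).trans hgr⟩

def ofNatFun (n : ℕ) (g : ℕ → ℕ) : PT n := fun x => if h : g x < n then some ⟨g x, h⟩ else none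

lemma ofNatFun_apply_of_lt {g : ℕ → ℕ} {x : Fin n} (h : g x < n) :
    ofNatFun n g x = some ⟨g x, h⟩ := dif_pos h

lemma val_eq_of_ofNatFun_eq_some {g : ℕ → ℕ} {x a : Fin n} (h : ofNatFun n g x = some a) :
    a.val = g x := by
  unfold ofNatFun at h
  split at h
  · cases h; rfl
  · cases h

lemma ofNatFun_congr {p g : ℕ → ℕ} (h : ∀ x < n, p x = g x) : ofNatFun n p = ofNatFun n g :=
  funext fun x => by simp only [ofNatFun, h x x.isLt]

lemma ofNatFun_mul_ofNatFun {p : ℕ → ℕ} (g : ℕ → ℕ) (hp : ∀ x < n, p x < n) :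
    ofNatFun n p * ofNatFun n g = ofNatFun n (g ∘ p) :=
  funext fun x => by rw [mul_apply, ofNatFun_apply_of_lt (hp x x.isLt)]; rfl

lemma mul_ofNatFun_of_eqOn_id (f : PT n) {g : ℕ → ℕ} (hg : ∀ x < n, g x = x) :
    f * ofNatFun n g = f := by
  funext x
  cases hx : f x with
  | none => simp [mul_apply, hx]
  | some a =>
    have ha := hg a a.isLt
    rw [mul_apply, hx, Option.bind_some, ofNatFun_apply_of_lt (by rw [ha]; exact a.isLt)]
    exact congrArg some (Fin.ext ha)

lemma an1_eq_ofNatFun : an1 n = ofNatFun n (· + 1) := rfl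

lemma piOP_eq_ofNatFun (i : ℕ) : piOP n i = ofNatFun n (fun x => if x ≤ i then x else x - 1) :=
  funext fun x => by rw [ofNatFun_apply_of_lt (by have := x.isLt; split_ifs <;> omega)]; rfl

def IsUnitStep (g : ℕ → ℕ) : Prop := ∀ x, g x ≤ g (x + 1) ∧ g (x + 1) ≤ g x + 1

lemma IsUnitStep.le_of_le {g : ℕ → ℕ} (hg : IsUnitStep g) {x y : ℕ} (h : x ≤ y) :
    g x ≤ g y ∧ g y ≤ g x + (y - x) := by
  induction y, h using Nat.le_induction with
  | base => simp
  | succ y hxy ih => have := hg y; omega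

lemma IsUnitStep.exists_last_flat {g : ℕ → ℕ} (hg : IsUnitStep g) {k : ℕ} (hk : g k < g 0 + k) :
    ∃ i < k, g (i + 1) = g i ∧ ∀ j, i < j → j < k → g (j + 1) = g j + 1 := by
  induction k with
  | zero => omega
  | succ k ih =>
    by_cases hflat : g (k + 1) = g k
    · exact ⟨k, by omega, hflat, fun j _ _ => by omega⟩
    · have := hg k
      obtain ⟨i, hik, hi, hlast⟩ := ih (by omega)
      refine ⟨i, by omega, hi, fun j hij hjk => ?_⟩
      rcases Nat.lt_succ_iff_lt_or_eq.1 hjk with hjk | rfl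
      exacts [hlast j hij hjk, by omega]

lemma mem_OCP_of_notMem_im {f : PT n}
    (h : ∀ x y a b, f x = some a → f y = some b → x ≤ y → a ≤ b ∧ b.val ≤ a.val + (y.val - x.val))
    (c : Fin n) (hc : c ∉ im f) : f ∈ OCP n (n - 1) :=
  ⟨(isOP_and_isContraction_of h).1, (isOP_and_isContraction_of h).2,
    (ncard_le_pred_iff_exists_notMem c.pos).2 ⟨c, hc⟩⟩

lemma ofNatFun_mem_OCP {g : ℕ → ℕ} (hg : IsUnitStep g) (c : Fin n) (hc : ∀ x < n, g x ≠ c) :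
    ofNatFun n g ∈ OCP n (n - 1) := by
  refine mem_OCP_of_notMem_im (fun x y a b ha hb hxy => ?_) c fun ⟨x, hx⟩ => hc x x.isLt ?_
  · rw [Fin.le_def, val_eq_of_ofNatFun_eq_some ha, val_eq_of_ofNatFun_eq_some hb]
    exact hg.le_of_le (Fin.le_def.1 hxy)
  · rw [← val_eq_of_ofNatFun_eq_some hx]

lemma genG_subset_OCP (hn : 2 ≤ n) : genG n ⊆ OCP n (n - 1) := by
  intro f hf
  simp only [genG, Set.mem_union, Set.mem_insert_iff, Set.mem_singleton_iff, Set.mem_image,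
    Set.mem_ofPred_eq] at hf
  rcases hf with ((rfl | rfl) | ⟨j, ⟨hj1, hj2⟩, rfl⟩) | ⟨i, hi, rfl⟩
  · exact ofNatFun_mem_OCP (fun x => by omega) ⟨0, by omega⟩ fun x _ => by simp
  · refine mem_OCP_of_notMem_im (fun x y a b ha hb hxy => ?_) ⟨n - 1, by omega⟩ fun ⟨x, hx⟩ => ?_
    · simp only [a1n, ne_eq, dite_not, Option.dite_none_left_eq_some, Option.some.injEq] at ha hb
      obtain ⟨-, rfl⟩ := ha
      obtain ⟨-, rfl⟩ := hb
      simp only [Fin.le_def] at hxy ⊢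
      omega
    · simp only [a1n, ne_eq, dite_not, Option.dite_none_left_eq_some, Option.some.injEq,
        Fin.ext_iff] at hx
      omega
  · refine mem_OCP_of_notMem_im (fun x y a b ha hb hxy => ?_) ⟨j, by omega⟩ fun ⟨x, hx⟩ => ?_
    · simp only [ajj, Option.ite_none_left_eq_some, Option.some.injEq] at ha hb
      obtain ⟨-, rfl⟩ := ha
      obtain ⟨-, rfl⟩ := hb
      exact ⟨hxy, by omega⟩
    · simp only [ajj, Option.ite_none_left_eq_some, Option.some.injEq] at hx
      exact hx.1 (by rw [hx.2])
  · rw [piOP_eq_ofNatFun]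
    refine ofNatFun_mem_OCP (fun x => by split_ifs <;> omega) ⟨n - 1, by omega⟩ fun x hx => ?_
    dsimp only
    split_ifs <;> omega

lemma ncard_genG (hn : 2 ≤ n) : (genG n).ncard = 2 * n - 1 := by
  have h0 : 0 < n := by omega
  have hpair : an1 n ≠ a1n n := fun h => by
    simpa [an1, a1n, show 1 < n by omega] using congrFun h ⟨0, h0⟩
  have hajj : Set.InjOn (ajj n) {j | 1 ≤ j ∧ j ≤ n - 2} := fun j ⟨_, hj⟩ j' _ h => by
    by_contra hne
    simpa [ajj, hne] using congrFun h ⟨j, by omega⟩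
  have hpi : Set.InjOn (piOP n) {i | i ≤ n - 2} := by
    have key : ∀ i i', i ≤ n - 2 → piOP n i = piOP n i' → i ≤ i' := fun i i' hi h => by
      by_contra hlt
      simpa [piOP, Fin.ext_iff, show i' + 1 ≤ i by omega] using congrFun h ⟨i' + 1, by omega⟩
    exact fun i hi i' hi' h => le_antisymm (key i i' hi h) (key i' i hi' h.symm)
  have hdisj₁ : Disjoint ({an1 n, a1n n} : Set (PT n)) (ajj n '' {j | 1 ≤ j ∧ j ≤ n - 2}) := by
    rw [Set.disjoint_right]
    rintro _ ⟨j, ⟨hj, -⟩, rfl⟩ (h | h) <;>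
      simpa [ajj, an1, a1n, show 0 ≠ j by omega, show 1 < n by omega] using congrFun h ⟨0, h0⟩
  have hdisj₂ : Disjoint ({an1 n, a1n n} ∪ ajj n '' {j | 1 ≤ j ∧ j ≤ n - 2})
      (piOP n '' {i | i ≤ n - 2}) := by
    rw [Set.disjoint_right]
    rintro _ ⟨i, -, rfl⟩ ((h | h) | ⟨j, ⟨-, hj⟩, h⟩)
    · simpa [piOP, an1, show ¬ n - 1 + 1 < n by omega] using congrFun h ⟨n - 1, by omega⟩
    · simpa [piOP, a1n] using congrFun h ⟨0, h0⟩
    · simpa [piOP, ajj] using congrFun h ⟨j, by omega⟩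
  rw [genG, Set.ncard_union_eq hdisj₂, Set.ncard_union_eq hdisj₁, Set.ncard_pair hpair,
    hajj.ncard_image, hpi.ncard_image]
  change 2 + (Set.Icc 1 (n - 2)).ncard + (Set.Iic (n - 2)).ncard = 2 * n - 1
  rw [← Finset.coe_Icc, ← Finset.coe_Iic, Set.ncard_coe_finset, Set.ncard_coe_finset,
    Nat.card_Icc, Nat.card_Iic]
  omega

/-- For an order-preserving contraction `f`, this extends `f` to a unit-step function: the term
of `d` is `f d`, lowered with slope one to the left of `d`. -/
def stepExtension (f : PT n) (x : ℕ) : ℕ :=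
  Finset.univ.sup fun d : Fin n => ((f d).map fun v => v.val - (d.val - x)).getD 0

lemma isUnitStep_stepExtension (f : PT n) : IsUnitStep (stepExtension f) := by
  refine fun x => ⟨Finset.sup_mono_fun fun d _ => ?_, Finset.sup_le fun d _ => ?_⟩
  · cases f d <;> simp only [Option.map_none, Option.map_some, Option.getD_none, Option.getD_some]
    all_goals omega
  · refine le_trans ?_ (Nat.add_le_add_right (Finset.le_sup (Finset.mem_univ d)) 1)
    cases f d <;> simp only [Option.map_none, Option.map_some, Option.getD_none, Option.getD_some]
    all_goals omega

lemma stepExtension_le (f : PT n) (x : ℕ) : stepExtension f x ≤ n - 1 :=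
  Finset.sup_le fun d _ => by
    cases f d with
    | none => simp
    | some v => simp only [Option.map_some, Option.getD_some]; omega

lemma stepExtension_eq_of_eq_some {f : PT n} (hf : IsOP f) (hc : IsContraction f) {x v : Fin n}
    (hx : f x = some v) : stepExtension f x = v := by
  refine le_antisymm (Finset.sup_le fun d _ => ?_) ?_
  · cases hd : f d with
    | none => simp
    | some w =>
      simp only [Option.map_some, Option.getD_some]
      rcases le_total d x with hdx | hxd
      · have := hf d x w v hd hx hdx
        rw [Fin.le_def] at this hdx
        omega
      · have := hc d x w v hd hx
        rw [Fin.le_def] at hxd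
        simp only [Nat.dist] at this
        omega
  · calc (v : ℕ) = ((f x).map fun v => v.val - (x.val - x.val)).getD 0 := by simp [hx]
      _ ≤ stepExtension f x := Finset.le_sup (f := fun d : Fin n => ((f d).map fun v =>
          v.val - (d.val - x.val)).getD 0) (Finset.mem_univ x)

section Closure

local notation "⟪G⟫" => Subsemigroup.closure (genG n)

lemma an1_mem_closure : an1 n ∈ ⟪G⟫ := Subsemigroup.subset_closure (by simp [genG])

lemma a1n_mem_closure : a1n n ∈ ⟪G⟫ := Subsemigroup.subset_closure (by simp [genG])

lemma ajj_mem_closure {j : ℕ} (hj : 1 ≤ j) (hj' : j ≤ n - 2) : ajj n j ∈ ⟪G⟫ :=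
  Subsemigroup.subset_closure (Or.inl (Or.inr ⟨j, ⟨hj, hj'⟩, rfl⟩))

lemma piOP_mem_closure {i : ℕ} (hi : i ≤ n - 2) : piOP n i ∈ ⟪G⟫ :=
  Subsemigroup.subset_closure (Or.inr ⟨i, hi, rfl⟩)

def idExcept (C : Finset (Fin n)) : PT n := fun x => if x ∈ C then none else some x

lemma idExcept_singleton_mem_closure (j : Fin n) : idExcept {j} ∈ ⟪G⟫ := by
  have hj := j.isLt
  by_cases h0 : j.val = 0
  · convert mul_mem a1n_mem_closure an1_mem_closure using 1
    funext x
    by_cases hx : x.val = 0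
    · simp [idExcept, mul_apply, a1n, hx, Fin.ext_iff, h0]
    · have := x.isLt
      simp [idExcept, mul_apply, a1n, an1, hx, Fin.ext_iff, h0,
        Nat.sub_add_cancel (Nat.pos_of_ne_zero hx)]
  by_cases hlast : j.val = n - 1
  · convert mul_mem an1_mem_closure a1n_mem_closure using 1
    funext x
    by_cases hx : x.val = n - 1
    · simp [idExcept, mul_apply, an1, hx, Fin.ext_iff, hlast, show ¬ n - 1 + 1 < n by omega]
    · have := x.isLt
      simp [idExcept, mul_apply, a1n, an1, hx, Fin.ext_iff, hlast, show x.val + 1 < n by omega]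
  · convert ajj_mem_closure (n := n) (j := j) (by omega) (by omega) using 1
    funext x
    simp [idExcept, ajj, Fin.ext_iff]

lemma idExcept_mul_mem_closure (C : Finset (Fin n)) {f : PT n} (hf : f ∈ ⟪G⟫) :
    idExcept C * f ∈ ⟪G⟫ := by
  induction C using Finset.induction_on with
  | empty =>
    convert hf using 1
    funext x
    simp [idExcept, mul_apply]
  | insert a C _ ih =>
    have : idExcept (insert a C) * f = idExcept {a} * (idExcept C * f) := by
      funext x
      by_cases hxa : x = a <;> by_cases hxC : x ∈ C <;> simp [idExcept, mul_apply, hxa, hxC]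
    rw [this]
    exact mul_mem (idExcept_singleton_mem_closure a) ih

lemma mem_closure_of_extends {f f' : PT n} (hf' : f' ∈ ⟪G⟫)
    (hff' : ∀ x a, f x = some a → f' x = some a) : f ∈ ⟪G⟫ := by
  convert idExcept_mul_mem_closure (Finset.univ.filter fun x => f x = none) hf' using 1
  funext x
  cases hx : f x with
  | none => simp [idExcept, mul_apply, hx]
  | some a => simp [idExcept, mul_apply, hx, hff' x a hx]

lemma ofNatFun_add_mem_closure {g : ℕ → ℕ} (hg : ofNatFun n g ∈ ⟪G⟫) (a : ℕ)
    (hlt : ∀ x < n, g x + a < n) : ofNatFun n (fun x => g x + a) ∈ ⟪G⟫ := by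
  induction a with
  | zero => simpa using hg
  | succ a ih =>
    change ofNatFun n ((· + 1) ∘ fun x => g x + a) ∈ _
    rw [← ofNatFun_mul_ofNatFun _ (by grind), ← an1_eq_ofNatFun]
    exact mul_mem (ih fun x hx => by grind) an1_mem_closure

lemma eqOn_id_or_ofNatFun_mem_closure {g : ℕ → ℕ} (hg : IsUnitStep g) (h0 : g 0 = 0) :
    (∀ x < n, g x = x) ∨ ofNatFun n g ∈ ⟪G⟫ := by
  -- `m` is the number of flat steps of `g` on `[n]`
  obtain ⟨m, hm⟩ : ∃ m, g (n - 1) + m = n - 1 :=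
    ⟨n - 1 - g (n - 1), by have := (hg.le_of_le (Nat.zero_le (n - 1))).2; omega⟩
  induction m generalizing g with
  | zero =>
    refine Or.inl fun x hx => ?_
    have := hg.le_of_le (Nat.zero_le x)
    have := hg.le_of_le (show x ≤ n - 1 by omega)
    omega
  | succ m ih =>
    refine Or.inr ?_
    obtain ⟨i, hi, hflat, hlast⟩ := hg.exists_last_flat (k := n - 1) (by omega)
    set g' : ℕ → ℕ := fun x => g x + if i < x then 1 else 0
    have hg' : IsUnitStep g' := fun x => by
      have := hg x
      rcases lt_trichotomy x i with h | rfl | h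
      · simp only [g', show ¬ i < x by omega, show ¬ i < x + 1 by omega]; omega
      · simp only [g', lt_irrefl, lt_add_one, if_true, if_false, hflat]; omega
      · simp only [g', h, h.trans (lt_add_one x), if_true]; omega
    -- `g` is `π_i` followed by `g'`, since after its last flat step `i` the function `g` rises
    -- at every step, exactly like `g'` one place earlier.
    have hfactor : ofNatFun n g = piOP n i * ofNatFun n g' := by
      rw [piOP_eq_ofNatFun, ofNatFun_mul_ofNatFun _ fun x hx => by split_ifs <;> omega]
      refine ofNatFun_congr fun x hx => ?_
      simp only [Function.comp, g']
      rcases lt_trichotomy x (i + 1) with hx' | rfl | hx'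
      · simp [show x ≤ i by omega, show ¬ i < x by omega]
      · simp [hflat]
      · have := hlast (x - 1) (by omega) (by omega)
        rw [Nat.sub_add_cancel (by omega)] at this
        rw [if_neg (show ¬ x ≤ i by omega), if_pos (show i < x - 1 by omega)]
        omega
    rw [hfactor]
    rcases ih hg' (by simp [g', h0]) (by simp only [g', hi, if_true]; omega) with hid | hmem
    · rw [mul_ofNatFun_of_eqOn_id _ hid]
      exact piOP_mem_closure (by omega)
    · exact mul_mem (piOP_mem_closure (by omega)) hmem

lemma ofNatFun_mem_closure {g : ℕ → ℕ} (hg : IsUnitStep g) (hlt : ∀ x < n, g x < n)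
    (hne : ∃ x < n, g x ≠ x) : ofNatFun n g ∈ ⟪G⟫ := by
  obtain ⟨x₀, hx₀, hgx₀⟩ := hne
  have hmono : ∀ x, g 0 ≤ g x := fun x => (hg.le_of_le (Nat.zero_le x)).1
  have hg' : IsUnitStep (fun x => g x - g 0) := fun x => by
    have := hg x; have := hmono x; dsimp only; omega
  rcases eqOn_id_or_ofNatFun_mem_closure (n := n) hg' (Nat.sub_self _) with hid | hmem
  · -- otherwise `g` translates `[n]` into itself, so it is the identity
    have : g (n - 1) - g 0 = n - 1 := hid (n - 1) (by omega)
    have : g x₀ - g 0 = x₀ := hid x₀ hx₀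
    have := hlt (n - 1) (by omega)
    have := hmono (n - 1)
    have := hmono x₀
    omega
  · rw [ofNatFun_congr fun x _ => (Nat.sub_add_cancel (hmono x)).symm]
    exact ofNatFun_add_mem_closure hmem (g 0) fun x hx => by
      have := hmono x; have := hlt x hx; omega

lemma OCP_le_closure (hn : 0 < n) : OCP n (n - 1) ≤ ⟪G⟫ := by
  rintro f ⟨hf, hc, hrank⟩
  by_cases hid : ∀ x a, f x = some a → a = x
  · obtain ⟨c, hcf⟩ := (ncard_le_pred_iff_exists_notMem hn).1 hrank
    refine mem_closure_of_extends (idExcept_singleton_mem_closure c) fun x a hx => ?_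
    obtain rfl := hid x a hx
    have : a ≠ c := fun h => hcf ⟨a, h ▸ hx⟩
    simp [idExcept, this]
  · push Not at hid
    obtain ⟨x₀, v₀, hx₀, hne⟩ := hid
    have hext := fun {x v} (h : f x = some v) => stepExtension_eq_of_eq_some hf hc h
    have hlt : ∀ x < n, stepExtension f x < n := fun x _ =>
      (stepExtension_le f x).trans_lt (by omega)
    refine mem_closure_of_extends (ofNatFun_mem_closure (isUnitStep_stepExtension f) hlt
      ⟨x₀, x₀.isLt, by rw [hext hx₀]; exact fun h => hne (Fin.ext h)⟩) fun x a hx => ?_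
    rw [ofNatFun_apply_of_lt (hlt x x.isLt)]
    exact congrArg some (Fin.ext (hext hx))

lemma closure_genG (hn : 2 ≤ n) : ⟪G⟫ = OCP n (n - 1) :=
  le_antisymm (Subsemigroup.closure_le.2 (genG_subset_OCP hn)) (OCP_le_closure (by omega))

end Closure

end PT

/-- for `n ≥ 3`, `G` has `2n-1` elements and generates
`⟨K_{n-1}⟩ = OCP_{n,n-1}`. -/
theorem stmt_11 {n : ℕ} (hn : 3 ≤ n) :
    (genG n).ncard = 2 * n - 1 ∧
      (Subsemigroup.closure (genG n) : Set (PT n)) =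
        {f : PT n | IsOP f ∧ IsContraction f ∧ (im f).ncard ≤ n - 1} :=
  ⟨PT.ncard_genG (by omega), by rw [PT.closure_genG (by omega)]; rfl⟩
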